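/- arXiv:1302.1114 — 5 statements merged into one kernel-verified Lean document; each statement's English description precedes it below -/
import Mathlib

section
/- Let f, g : (0,1) → ℝ be nonincreasing, bounded functions with f(s) > 0 and g(s) > 0 for all s ∈ (0,1), and such that log∘f and log∘g are Lebesgue integrable on (0,1). Then the following are equivalent: (i) ∫₀ᵗ log(g(s)) ds ≤ ∫₀ᵗ log(f(s)) ds for all t ∈ (0,1]; (ii) ∫₀¹ log₊(g(s)/t) ds ≤ ∫₀¹ log₊(f(s)/t) ds for all t > 0. -/
open MeasureTheory Real Set

/-!
For an antitone `F` on `(p, q)` and a level `c`, the map `a ↦ ∫ x in Ioo p a, F x - c * (a - p)`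
is bounded by `∫ x in Ioo p q, max (F x - c) 0`, with equality at the point `a` where `F` crosses
`c`. Hence the truncated integrals of `F` at all levels are a Legendre-type transform of the
primitive of `F`: comparing primitives compares the transforms, and conversely the level
`c = F t` recovers the primitive at `t`. With `F = log ∘ f` and `c = log t` this is the theorem;
the endpoint `t = 1` follows by continuity of the primitives.
-/

section Truncation

variable {α : Type*} [MeasurableSpace α] {μ : Measure α} {f : α → ℝ} {s t : Set α}

theorem setIntegral_sub_mul_le_setIntegral_max_sub (hst : s ⊆ t) (ht : μ t ≠ ⊤)
    (hf : IntegrableOn f t μ) (c : ℝ) :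
    (∫ x in s, f x ∂μ) - c * μ.real s ≤ ∫ x in t, max (f x - c) 0 ∂μ := by
  have hfc : IntegrableOn (fun x => f x - c) t μ := hf.sub (integrableOn_const ht)
  calc (∫ x in s, f x ∂μ) - c * μ.real s
      = ∫ x in s, (f x - c) ∂μ := by
        rw [integral_sub (hf.mono_set hst) (integrableOn_const (measure_mono hst |>.trans_lt
          ht.lt_top).ne), setIntegral_const, smul_eq_mul, mul_comm]
    _ ≤ ∫ x in s, max (f x - c) 0 ∂μ :=
        integral_mono (hfc.mono_set hst) (IntegrableOn.mono_set hfc.pos_part hst)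
          fun _ => le_max_left _ _
    _ ≤ ∫ x in t, max (f x - c) 0 ∂μ :=
        setIntegral_mono_set hfc.pos_part (.of_forall fun _ => le_max_right _ _)
          hst.eventuallyLE

theorem setIntegral_max_sub_eq (hs : MeasurableSet s) (hst : s ⊆ t) (hs_fin : μ s ≠ ⊤)
    (hf : IntegrableOn f s μ) {c : ℝ}
    (hsplit : ∀ᵐ x ∂μ.restrict t, (x ∈ s → c ≤ f x) ∧ (x ∉ s → f x ≤ c)) :
    ∫ x in t, max (f x - c) 0 ∂μ = (∫ x in s, f x ∂μ) - c * μ.real s := by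
  have hind : (fun x => max (f x - c) 0) =ᵐ[μ.restrict t] s.indicator (fun x => f x - c) := by
    filter_upwards [hsplit] with x ⟨hin, hout⟩
    by_cases hx : x ∈ s
    · rw [indicator_of_mem hx, max_eq_left (sub_nonneg.2 (hin hx))]
    · rw [indicator_of_notMem hx, max_eq_right (sub_nonpos.2 (hout hx))]
  rw [integral_congr_ae hind, setIntegral_indicator hs, inter_eq_self_of_subset_right hst,
    integral_sub hf (integrableOn_const hs_fin), setIntegral_const, smul_eq_mul, mul_comm]

end Truncation

theorem AntitoneOn.log_comp {α : Type*} [Preorder α] {f : α → ℝ} {s : Set α}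
    (hf : AntitoneOn f s) (hpos : ∀ x ∈ s, 0 < f x) : AntitoneOn (fun x => log (f x)) s :=
  fun _ hx _ hy hxy => log_le_log (hpos _ hy) (hf hx hy hxy)

section Interval

variable {F G : ℝ → ℝ} {p q : ℝ}

theorem AntitoneOn.exists_threshold (hpq : p ≤ q) (hF : AntitoneOn F (Ioo p q)) (c : ℝ) :
    ∃ a ∈ Icc p q, ∀ x ∈ Ioo p q, (x < a → c ≤ F x) ∧ (a < x → F x ≤ c) := by
  set S := insert p {x | x ∈ Ioo p q ∧ c < F x}
  have hS_le : ∀ x ∈ S, x ≤ q := by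
    rintro x (rfl | hx)
    exacts [hpq, hx.1.2.le]
  have hbdd : BddAbove S := ⟨q, hS_le⟩
  refine ⟨sSup S, ⟨le_csSup hbdd (mem_insert _ _), csSup_le (insert_nonempty _ _) hS_le⟩,
    fun x hx => ⟨fun hxa => ?_, fun hax => ?_⟩⟩
  · obtain ⟨y, hy, hxy⟩ := exists_lt_of_lt_csSup (insert_nonempty _ _) hxa
    rcases hy with rfl | hy
    · exact absurd hx.1 hxy.not_gt
    · exact (hy.2.trans_le (hF hx hy.1 hxy.le)).le
  · exact not_lt.1 fun hcx => hax.not_ge (le_csSup hbdd (mem_insert_of_mem _ ⟨hx, hcx⟩))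

theorem setIntegral_Ioo_sub_mul_le {a : ℝ} (ha : a ∈ Icc p q) (hF : IntegrableOn F (Ioo p q))
    (c : ℝ) : (∫ x in Ioo p a, F x) - c * (a - p) ≤ ∫ x in Ioo p q, max (F x - c) 0 := by
  simpa only [volume_real_Ioo_of_le ha.1] using
    setIntegral_sub_mul_le_setIntegral_max_sub (Ioo_subset_Ioo_right ha.2) measure_Ioo_lt_top.ne
      hF c

theorem setIntegral_Ioo_max_sub_eq {a c : ℝ} (ha : a ∈ Icc p q) (hF : IntegrableOn F (Ioo p q))
    (hthr : ∀ x ∈ Ioo p q, (x < a → c ≤ F x) ∧ (a < x → F x ≤ c)) :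
    ∫ x in Ioo p q, max (F x - c) 0 = (∫ x in Ioo p a, F x) - c * (a - p) := by
  have hsub : Ioo p a ⊆ Ioo p q := Ioo_subset_Ioo_right ha.2
  rw [setIntegral_max_sub_eq measurableSet_Ioo hsub measure_Ioo_lt_top.ne (hF.mono_set hsub),
    volume_real_Ioo_of_le ha.1]
  have hne : ∀ᵐ x ∂volume, x ≠ a := compl_mem_ae_iff.2 (measure_singleton a)
  filter_upwards [ae_restrict_mem measurableSet_Ioo, ae_restrict_of_ae hne] with x hx hxa
  refine ⟨fun hxs => (hthr x hx).1 hxs.2, fun hxs => (hthr x hx).2 ?_⟩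
  exact (lt_or_gt_of_ne hxa).resolve_left fun hxa' => hxs ⟨hx.1, hxa'⟩

theorem continuousOn_setIntegral_Ioo (hpq : p ≤ q) (hF : IntegrableOn F (Ioo p q)) :
    ContinuousOn (fun t => ∫ x in Ioo p t, F x) (Icc p q) := by
  have hcont := intervalIntegral.continuousOn_primitive_interval (μ := volume) (a := p) (b := q)
    (f := F) (by rwa [uIcc_of_le hpq, integrableOn_Icc_iff_integrableOn_Ioo])
  rw [uIcc_of_le hpq] at hcont
  refine hcont.congr fun t ht => ?_
  dsimp only
  rw [intervalIntegral.integral_of_le ht.1, integral_Ioc_eq_integral_Ioo]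

theorem AntitoneOn.setIntegral_Ioo_le_iff_setIntegral_max_sub_le (hpq : p < q)
    (hF : AntitoneOn F (Ioo p q)) (hG : AntitoneOn G (Ioo p q))
    (hFi : IntegrableOn F (Ioo p q)) (hGi : IntegrableOn G (Ioo p q)) :
    (∀ t ∈ Ioc p q, ∫ x in Ioo p t, G x ≤ ∫ x in Ioo p t, F x) ↔
      ∀ c, ∫ x in Ioo p q, max (G x - c) 0 ≤ ∫ x in Ioo p q, max (F x - c) 0 := by
  constructor
  · intro h c
    obtain ⟨a, ha, hthr⟩ := hG.exists_threshold hpq.le c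
    have hGF : ∫ x in Ioo p a, G x ≤ ∫ x in Ioo p a, F x := by
      rcases ha.1.eq_or_lt with rfl | hpa
      · simp
      · exact h a ⟨hpa, ha.2⟩
    calc ∫ x in Ioo p q, max (G x - c) 0
        = (∫ x in Ioo p a, G x) - c * (a - p) := setIntegral_Ioo_max_sub_eq ha hGi hthr
      _ ≤ (∫ x in Ioo p a, F x) - c * (a - p) := sub_le_sub_right hGF _
      _ ≤ ∫ x in Ioo p q, max (F x - c) 0 := setIntegral_Ioo_sub_mul_le ha hFi c
  · intro h
    have hopen : ∀ t ∈ Ioo p q, ∫ x in Ioo p t, G x ≤ ∫ x in Ioo p t, F x := by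
      intro t ht
      have hF_eq := setIntegral_Ioo_max_sub_eq (Ioo_subset_Icc_self ht) hFi
        fun x hx => ⟨fun hxt => hF hx ht hxt.le, fun htx => hF ht hx htx.le⟩
      have hG_le := setIntegral_Ioo_sub_mul_le (Ioo_subset_Icc_self ht) hGi (F t)
      linarith [h (F t)]
    have hclosure : closure (Ioo p q) = Icc p q := closure_Ioo hpq.ne
    intro t ht
    refine le_on_closure hopen ?_ ?_ (hclosure ▸ Ioc_subset_Icc_self ht) <;> rw [hclosure]
    exacts [continuousOn_setIntegral_Ioo hpq.le hGi, continuousOn_setIntegral_Ioo hpq.le hFi]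

end Interval

theorem log_submajorization_iff_log_plus_general
    (f g : ℝ → ℝ)
    (hf_anti : AntitoneOn f (Ioo (0:ℝ) 1)) (hg_anti : AntitoneOn g (Ioo (0:ℝ) 1))
    (hf_pos : ∀ s ∈ Ioo (0:ℝ) 1, 0 < f s) (hg_pos : ∀ s ∈ Ioo (0:ℝ) 1, 0 < g s)
    (hf_int : IntegrableOn (fun s => log (f s)) (Ioo (0:ℝ) 1))
    (hg_int : IntegrableOn (fun s => log (g s)) (Ioo (0:ℝ) 1)) :
    (∀ t ∈ Ioc (0:ℝ) 1,
        ∫ s in Ioo (0:ℝ) t, log (g s) ≤ ∫ s in Ioo (0:ℝ) t, log (f s)) ↔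
    (∀ t : ℝ, 0 < t →
        ∫ s in Ioo (0:ℝ) 1, max (log (g s / t)) 0 ≤
          ∫ s in Ioo (0:ℝ) 1, max (log (f s / t)) 0) := by
  have log_div_eq : ∀ h : ℝ → ℝ, (∀ s ∈ Ioo (0:ℝ) 1, 0 < h s) → ∀ t : ℝ, 0 < t →
      ∫ s in Ioo (0:ℝ) 1, max (log (h s / t)) 0 = ∫ s in Ioo (0:ℝ) 1, max (log (h s) - log t) 0 :=
    fun h hpos t ht => setIntegral_congr_fun measurableSet_Ioo fun s hs => by
      rw [log_div (hpos s hs).ne' ht.ne']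
  rw [(hf_anti.log_comp hf_pos).setIntegral_Ioo_le_iff_setIntegral_max_sub_le one_pos
    (hg_anti.log_comp hg_pos) hf_int hg_int]
  refine ⟨fun h t ht => ?_, fun h c => ?_⟩
  · rw [log_div_eq g hg_pos t ht, log_div_eq f hf_pos t ht]
    exact h (log t)
  · simpa only [log_div_eq g hg_pos _ (exp_pos c), log_div_eq f hf_pos _ (exp_pos c), log_exp]
      using h (exp c) (exp_pos c)

theorem log_submajorization_iff_log_plus
    (f g : ℝ → ℝ)
    (hf_anti : AntitoneOn f (Ioo (0:ℝ) 1)) (hg_anti : AntitoneOn g (Ioo (0:ℝ) 1))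
    (hf_bdd : ∃ C : ℝ, ∀ s ∈ Ioo (0:ℝ) 1, f s ≤ C)
    (hg_bdd : ∃ C : ℝ, ∀ s ∈ Ioo (0:ℝ) 1, g s ≤ C)
    (hf_pos : ∀ s ∈ Ioo (0:ℝ) 1, 0 < f s) (hg_pos : ∀ s ∈ Ioo (0:ℝ) 1, 0 < g s)
    (hf_int : IntegrableOn (fun s => log (f s)) (Ioo (0:ℝ) 1))
    (hg_int : IntegrableOn (fun s => log (g s)) (Ioo (0:ℝ) 1)) :
    (∀ t ∈ Ioc (0:ℝ) 1,
        ∫ s in Ioo (0:ℝ) t, log (g s) ≤ ∫ s in Ioo (0:ℝ) t, log (f s)) ↔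
    (∀ t : ℝ, 0 < t →
        ∫ s in Ioo (0:ℝ) 1, max (log (g s / t)) 0 ≤
          ∫ s in Ioo (0:ℝ) 1, max (log (f s / t)) 0) :=
  log_submajorization_iff_log_plus_general f g hf_anti hg_anti hf_pos hg_pos hf_int hg_int
end

section
/- Let f, g : (0,1) → ℝ be nonincreasing, bounded functions with f(s) > 0 and g(s) > 0 for all s ∈ (0,1), such that log∘f and log∘g are Lebesgue integrable on (0,1), and suppose g is logarithmically submajorized by f, i.e., ∫₀ᵗ log(g(s)) ds ≤ ∫₀ᵗ log(f(s)) ds for all t ∈ (0,1]. Then 1+g is logarithmically submajorized by 1+f, i.e., ∫₀ᵗ log(1+g(s)) ds ≤ ∫₀ᵗ log(1+f(s)) ds for all t ∈ (0,1]. -/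
/-!
Put `h = log g` and `k = log f`. Since `h` is antitone, for every level `c` the set where `h > c`
is an initial segment `(0, m)` of `(0, t)`, so majorization on `(0, m)` gives
`∫₀ᵗ (h - c)⁺ ≤ ∫₀ᵗ (k - c)⁺`. The softplus function `Ψ x = log (1 + eˣ)` is a mixture of these
hinge functions, `Ψ x = ∫ (x - c)⁺ Ψ'' c dc` with `Ψ'' = σ (1 - σ) > 0` the logistic density, so
integrating the hinge inequalities against `Ψ''` (Tonelli) yields `∫₀ᵗ Ψ ∘ h ≤ ∫₀ᵗ Ψ ∘ k`, which is
the claim because `Ψ (log y) = log (1 + y)`.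
-/

open MeasureTheory Real Set
open Filter Topology

namespace Real

noncomputable def softplus (x : ℝ) : ℝ := log (1 + exp x)

noncomputable def logisticDensity (x : ℝ) : ℝ := sigmoid x * (1 - sigmoid x)

lemma logisticDensity_pos (x : ℝ) : 0 < logisticDensity x :=
  mul_pos (sigmoid_pos x) (sub_pos.2 (sigmoid_lt_one x))

lemma continuous_logisticDensity : Continuous logisticDensity :=
  continuous_sigmoid.mul (continuous_const.sub continuous_sigmoid)

lemma softplus_nonneg (x : ℝ) : 0 ≤ softplus x :=
  log_nonneg (by linarith [exp_pos x])

lemma softplus_le (x : ℝ) : softplus x ≤ log 2 + |x| := by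
  have h : 1 + exp x ≤ 2 * exp |x| := by
    linarith [one_le_exp (abs_nonneg x), exp_le_exp.2 (le_abs_self x)]
  calc softplus x ≤ log (2 * exp |x|) := log_le_log (by positivity) h
    _ = log 2 + |x| := by rw [log_mul two_ne_zero (exp_ne_zero _), log_exp]

lemma continuous_softplus : Continuous softplus :=
  (continuous_const.add continuous_exp).log fun x => (by positivity : 0 < 1 + exp x).ne'

lemma hasDerivAt_softplus (x : ℝ) : HasDerivAt softplus (sigmoid x) x := by
  refine (((hasDerivAt_exp x).const_add 1).log (by positivity)).congr_deriv ?_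
  rw [sigmoid_def, exp_neg]
  field_simp
  ring

lemma tendsto_softplus_atBot : Tendsto softplus atBot (𝓝 0) := by
  have h : Tendsto (fun x => 1 + exp x) atBot (𝓝 1) := by
    simpa using tendsto_exp_atBot.const_add 1
  rw [← log_one]
  exact (continuousAt_log one_ne_zero).tendsto.comp h

lemma sigmoid_le_exp (x : ℝ) : sigmoid x ≤ exp x := by
  rw [sigmoid_def, inv_le_iff_one_le_mul₀ (by positivity), mul_add, ← exp_add]
  simp [exp_nonneg]

-- `G c = (x - c) * sigmoid c + softplus c` has `G' c = (x - c) * logisticDensity c`,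
-- `G x = softplus x` and `G c → 0` as `c → -∞`; this is `-G (x - u)`.
lemma hasDerivAt_primitive_mul_logisticDensity (x u : ℝ) :
    HasDerivAt (fun u => -(u * sigmoid (x - u) + softplus (x - u)))
      (u * logisticDensity (x - u)) u := by
  have hsub : HasDerivAt (fun u : ℝ => x - u) (-1) u := (hasDerivAt_id u).const_sub x
  refine (((hasDerivAt_id' u).mul ((hasDerivAt_sigmoid _).comp u hsub)).add
    ((hasDerivAt_softplus _).comp u hsub)).neg.congr_deriv ?_
  simp only [logisticDensity, Function.comp_apply]
  ring

lemma tendsto_primitive_mul_logisticDensity_atTop (x : ℝ) :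
    Tendsto (fun u => -(u * sigmoid (x - u) + softplus (x - u))) atTop (𝓝 0) := by
  have hx : Tendsto (fun u : ℝ => x - u) atTop atBot :=
    tendsto_atBot_add_const_left _ x tendsto_neg_atTop_atBot
  have hmul : Tendsto (fun u => u * sigmoid (x - u)) atTop (𝓝 0) := by
    have hexp : Tendsto (fun u => exp x * (u ^ 1 * exp (-u))) atTop (𝓝 0) := by
      simpa using (tendsto_pow_mul_exp_neg_atTop_nhds_zero 1).const_mul (exp x)
    refine squeeze_zero' ?_ ?_ hexp
    · filter_upwards [eventually_ge_atTop 0] with u hu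
      exact mul_nonneg hu (sigmoid_nonneg _)
    · filter_upwards [eventually_ge_atTop 0] with u hu
      calc u * sigmoid (x - u) ≤ u * exp (x - u) :=
            mul_le_mul_of_nonneg_left (sigmoid_le_exp _) hu
        _ = exp x * (u ^ 1 * exp (-u)) := by rw [sub_eq_add_neg, exp_add]; ring
  simpa using (hmul.add (tendsto_softplus_atBot.comp hx)).neg

lemma integrableOn_Ioi_mul_logisticDensity (x : ℝ) :
    IntegrableOn (fun u => u * logisticDensity (x - u)) (Ioi 0) :=
  integrableOn_Ioi_deriv_of_nonneg' (fun u _ => hasDerivAt_primitive_mul_logisticDensity x u)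
    (fun _ hu => (mul_pos hu (logisticDensity_pos _)).le)
    (tendsto_primitive_mul_logisticDensity_atTop x)

lemma integral_Ioi_mul_logisticDensity (x : ℝ) :
    ∫ u in Ioi 0, u * logisticDensity (x - u) = softplus x := by
  rw [integral_Ioi_of_hasDerivAt_of_nonneg'
    (fun u _ => hasDerivAt_primitive_mul_logisticDensity x u)
    (fun _ hu => (mul_pos hu (logisticDensity_pos _)).le)
    (tendsto_primitive_mul_logisticDensity_atTop x)]
  simp

lemma ofReal_softplus_eq_lintegral (x : ℝ) :
    ENNReal.ofReal (softplus x) = ∫⁻ c, ENNReal.ofReal (max (x - c) 0 * logisticDensity c) := by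
  calc ENNReal.ofReal (softplus x)
      = ∫⁻ u in Ioi 0, ENNReal.ofReal (u * logisticDensity (x - u)) := by
        rw [← integral_Ioi_mul_logisticDensity, ofReal_integral_eq_lintegral_ofReal
          (integrableOn_Ioi_mul_logisticDensity x)]
        filter_upwards [ae_restrict_mem measurableSet_Ioi] with u hu
        exact (mul_pos hu (logisticDensity_pos _)).le
    _ = ∫⁻ u, ENNReal.ofReal (max u 0 * logisticDensity (x - u)) := by
        rw [← setLIntegral_eq_of_support_subset (s := Ioi 0)
          (f := fun u => ENNReal.ofReal (max u 0 * logisticDensity (x - u)))]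
        · refine setLIntegral_congr_fun measurableSet_Ioi fun u hu => ?_
          rw [max_eq_left (mem_Ioi.1 hu).le]
        · exact fun u hu => mem_Ioi.2 (lt_of_not_ge fun h => hu (by simp [max_eq_right h]))
    _ = ∫⁻ c, ENNReal.ofReal (max (x - c) 0 * logisticDensity c) := by
        rw [← lintegral_sub_left_eq_self _ x]
        simp

end Real

section

variable {α : Type*} [MeasurableSpace α] {μ : Measure α}

lemma lintegral_ofReal_softplus_comp [SFinite μ] {φ : α → ℝ} (hφ : AEMeasurable φ μ) :
    ∫⁻ a, ENNReal.ofReal (softplus (φ a)) ∂μ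
      = ∫⁻ c, (∫⁻ a, ENNReal.ofReal (max (φ a - c) 0) ∂μ) * ENNReal.ofReal (logisticDensity c) := by
  have hmeas : AEMeasurable (Function.uncurry fun a c =>
      ENNReal.ofReal (max (φ a - c) 0 * logisticDensity c)) (μ.prod volume) := by
    have hcont : Continuous fun q : ℝ × ℝ =>
        ENNReal.ofReal (max (q.1 - q.2) 0 * logisticDensity q.2) :=
      ENNReal.continuous_ofReal.comp <|
        ((continuous_fst.sub continuous_snd).max continuous_const).mul
          (continuous_logisticDensity.comp continuous_snd)
    exact hcont.measurable.comp_aemeasurable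
      ((hφ.comp_quasiMeasurePreserving Measure.quasiMeasurePreserving_fst).prodMk
        measurable_snd.aemeasurable)
  simp_rw [ofReal_softplus_eq_lintegral]
  rw [lintegral_lintegral_swap hmeas]
  refine lintegral_congr fun c => ?_
  simp_rw [ENNReal.ofReal_mul (le_max_right _ 0)]
  exact lintegral_mul_const'' _
    (ENNReal.measurable_ofReal.comp_aemeasurable ((hφ.sub_const c).max aemeasurable_const))

theorem integral_softplus_le_of_integral_posPart_sub_le [IsFiniteMeasure μ] {h k : α → ℝ}
    (hh : Integrable h μ) (hk : Integrable k μ)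
    (hhk : ∀ c, ∫ a, max (h a - c) 0 ∂μ ≤ ∫ a, max (k a - c) 0 ∂μ) :
    ∫ a, softplus (h a) ∂μ ≤ ∫ a, softplus (k a) ∂μ := by
  have integral_eq (φ : α → ℝ) (hφ : Integrable φ μ) : ∫ a, softplus (φ a) ∂μ
      = (∫⁻ a, ENNReal.ofReal (softplus (φ a)) ∂μ).toReal :=
    integral_eq_lintegral_of_nonneg_ae (.of_forall fun a => softplus_nonneg _)
      (continuous_softplus.comp_aestronglyMeasurable hφ.aestronglyMeasurable)
  have hk_softplus : Integrable (fun a => softplus (k a)) μ := by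
    refine ((integrable_const (log 2)).add hk.abs).mono'
      (continuous_softplus.comp_aestronglyMeasurable hk.aestronglyMeasurable)
      (.of_forall fun a => ?_)
    rw [norm_of_nonneg (softplus_nonneg _)]
    exact softplus_le _
  rw [integral_eq h hh, integral_eq k hk]
  refine ENNReal.toReal_mono hk_softplus.lintegral_lt_top.ne ?_
  rw [lintegral_ofReal_softplus_comp hh.aemeasurable,
    lintegral_ofReal_softplus_comp hk.aemeasurable]
  refine lintegral_mono fun c => mul_le_mul_left ?_ _
  have lintegral_eq (φ : α → ℝ) (hφ : Integrable φ μ) :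
      ∫⁻ a, ENNReal.ofReal (max (φ a - c) 0) ∂μ = ENNReal.ofReal (∫ a, max (φ a - c) 0 ∂μ) :=
    (ofReal_integral_eq_lintegral_ofReal (hφ.sub (integrable_const c)).pos_part
      (.of_forall fun _ => le_max_right _ _)).symm
  rw [lintegral_eq h hh, lintegral_eq k hk]
  exact ENNReal.ofReal_le_ofReal (hhk c)

end

theorem setIntegral_posPart_sub_le_of_antitoneOn {h k : ℝ → ℝ} {a b : ℝ}
    (hh : AntitoneOn h (Ioo a b)) (hhi : IntegrableOn h (Ioo a b)) (hki : IntegrableOn k (Ioo a b))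
    (hmaj : ∀ m ∈ Ioc a b, ∫ s in Ioo a m, h s ≤ ∫ s in Ioo a m, k s) (c : ℝ) :
    ∫ s in Ioo a b, max (h s - c) 0 ≤ ∫ s in Ioo a b, max (k s - c) 0 := by
  rcases le_or_gt b a with hba | hab
  · simp [Ioo_eq_empty (not_lt.2 hba)]
  set A := {s ∈ Ioo a b | c < h s}
  have hbdd : BddAbove (insert a A) := ⟨b, by
    rintro s (rfl | hs)
    exacts [hab.le, hs.1.2.le]⟩
  set m := sSup (insert a A)
  have ham : a ≤ m := le_csSup hbdd (mem_insert a A)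
  have hmb : m ≤ b := csSup_le (insert_nonempty a A) (by
    rintro s (rfl | hs)
    exacts [hab.le, hs.1.2.le])
  have above : ∀ s ∈ Ioo a m, c < h s := by
    intro s hs
    obtain ⟨u, hu | hu, hsu⟩ := exists_lt_of_lt_csSup (insert_nonempty a A) hs.2
    · exact absurd (hu ▸ hsu) (not_lt.2 hs.1.le)
    · exact hu.2.trans_le (hh ⟨hs.1, hs.2.trans_le hmb⟩ hu.1 hsu.le)
  have below : ∀ s ∈ Ioo m b, h s ≤ c := fun s hs =>
    not_lt.1 fun hcs =>
      hs.1.not_ge (le_csSup hbdd (mem_insert_of_mem a ⟨⟨ham.trans_lt hs.1, hs.2⟩, hcs⟩))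
  have hmaj_m : ∫ s in Ioo a m, h s ≤ ∫ s in Ioo a m, k s := by
    rcases ham.eq_or_lt with ham | ham
    · simp [← ham]
    · exact hmaj m ⟨ham, hmb⟩
  have hsub : Ioo a m ⊆ Ioo a b := Ioo_subset_Ioo_right hmb
  have hk_pos : IntegrableOn (fun s => max (k s - c) 0) (Ioo a b) :=
    (hki.sub (integrableOn_const (by simp))).pos_part
  calc ∫ s in Ioo a b, max (h s - c) 0
      = ∫ s in Ioo a m, max (h s - c) 0 := by
        refine setIntegral_eq_of_subset_of_ae_sdiff_eq_zero
          measurableSet_Ioo.nullMeasurableSet hsub ?_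
        -- `h m` itself may exceed `c`, but `{m}` is null
        filter_upwards [measure_eq_zero_iff_ae_notMem.1 (measure_singleton m)] with s hsm hs
        have hms : m < s := lt_of_le_of_ne (not_lt.1 fun h' => hs.2 ⟨hs.1.1, h'⟩) (Ne.symm hsm)
        exact max_eq_right (sub_nonpos.2 (below s ⟨hms, hs.1.2⟩))
    _ = ∫ s in Ioo a m, (h s - c) :=
        setIntegral_congr_fun measurableSet_Ioo fun s hs =>
          max_eq_left (sub_nonneg.2 (above s hs).le)
    _ ≤ ∫ s in Ioo a m, (k s - c) := by
        rw [integral_sub (hhi.mono_set hsub) (integrableOn_const (by simp)),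
          integral_sub (hki.mono_set hsub) (integrableOn_const (by simp))]
        linarith
    _ ≤ ∫ s in Ioo a m, max (k s - c) 0 :=
        setIntegral_mono_on ((hki.mono_set hsub).sub (integrableOn_const (by simp)))
          (hk_pos.mono_set hsub) measurableSet_Ioo fun s _ => le_max_left _ _
    _ ≤ ∫ s in Ioo a b, max (k s - c) 0 :=
        setIntegral_mono_set hk_pos (.of_forall fun _ => le_max_right _ _) hsub.eventuallyLE

theorem log_submajorization_add_one_general
    (f g : ℝ → ℝ)
    (hg_anti : AntitoneOn g (Ioo (0:ℝ) 1))
    (hf_pos : ∀ s ∈ Ioo (0:ℝ) 1, 0 < f s) (hg_pos : ∀ s ∈ Ioo (0:ℝ) 1, 0 < g s)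
    (hf_int : IntegrableOn (fun s => log (f s)) (Ioo (0:ℝ) 1))
    (hg_int : IntegrableOn (fun s => log (g s)) (Ioo (0:ℝ) 1))
    (hmaj : ∀ t ∈ Ioc (0:ℝ) 1,
        ∫ s in Ioo (0:ℝ) t, log (g s) ≤ ∫ s in Ioo (0:ℝ) t, log (f s)) :
    ∀ t ∈ Ioc (0:ℝ) 1,
        ∫ s in Ioo (0:ℝ) t, log (1 + g s) ≤ ∫ s in Ioo (0:ℝ) t, log (1 + f s) := by
  intro t ht
  have hsub : Ioo (0:ℝ) t ⊆ Ioo 0 1 := Ioo_subset_Ioo_right ht.2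
  have softplus_log (φ : ℝ → ℝ) (hφ : ∀ s ∈ Ioo (0:ℝ) 1, 0 < φ s) :
      ∫ s in Ioo (0:ℝ) t, log (1 + φ s) = ∫ s in Ioo (0:ℝ) t, softplus (log (φ s)) :=
    setIntegral_congr_fun measurableSet_Ioo fun s hs => by rw [softplus, exp_log (hφ s (hsub hs))]
  have hlog_anti : AntitoneOn (fun s => log (g s)) (Ioo 0 t) := fun s hs u hu hsu =>
    log_le_log (hg_pos u (hsub hu)) (hg_anti (hsub hs) (hsub hu) hsu)
  rw [softplus_log g hg_pos, softplus_log f hf_pos]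
  exact integral_softplus_le_of_integral_posPart_sub_le (hg_int.mono_set hsub)
    (hf_int.mono_set hsub) (setIntegral_posPart_sub_le_of_antitoneOn hlog_anti
      (hg_int.mono_set hsub) (hf_int.mono_set hsub) fun m hm => hmaj m ⟨hm.1, hm.2.trans ht.2⟩)

theorem log_submajorization_add_one
    (f g : ℝ → ℝ)
    (hf_anti : AntitoneOn f (Ioo (0:ℝ) 1)) (hg_anti : AntitoneOn g (Ioo (0:ℝ) 1))
    (hf_bdd : ∃ C : ℝ, ∀ s ∈ Ioo (0:ℝ) 1, f s ≤ C)
    (hg_bdd : ∃ C : ℝ, ∀ s ∈ Ioo (0:ℝ) 1, g s ≤ C)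
    (hf_pos : ∀ s ∈ Ioo (0:ℝ) 1, 0 < f s) (hg_pos : ∀ s ∈ Ioo (0:ℝ) 1, 0 < g s)
    (hf_int : IntegrableOn (fun s => log (f s)) (Ioo (0:ℝ) 1))
    (hg_int : IntegrableOn (fun s => log (g s)) (Ioo (0:ℝ) 1))
    (hmaj : ∀ t ∈ Ioc (0:ℝ) 1,
        ∫ s in Ioo (0:ℝ) t, log (g s) ≤ ∫ s in Ioo (0:ℝ) t, log (f s)) :
    ∀ t ∈ Ioc (0:ℝ) 1,
        ∫ s in Ioo (0:ℝ) t, log (1 + g s) ≤ ∫ s in Ioo (0:ℝ) t, log (1 + f s) :=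
  log_submajorization_add_one_general f g hg_anti hf_pos hg_pos hf_int hg_int hmaj
end

section
/- Let f, g : (0,1) → ℝ be nonincreasing, bounded functions with f(s) > 0 and g(s) > 0 for all s ∈ (0,1), such that log∘f and log∘g are Lebesgue integrable on (0,1), and suppose g is logarithmically submajorized by f, i.e., ∫₀ᵗ log(g(s)) ds ≤ ∫₀ᵗ log(f(s)) ds for all t ∈ (0,1]. Then ∫₀¹ log(1+g(s)²) ds ≤ ∫₀¹ log(1+f(s)²) ds. -/
open MeasureTheory Real Set

/-!
Concavity of `log` gives `log (1 + x) - log (1 + y) ≤ x / (1 + x) * (log x - log y)` for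
`x, y > 0`; with `x = g²`, `y = f²` the integrand `log (1 + g²) - log (1 + f²)` is bounded by
`2 w (log g - log f)` for the weight `w = g² / (1 + g²)`, which is nonincreasing because `g` is.
A nonincreasing weight in `[0, 1]` preserves the sign of `∫₀ᵗ (log g - log f) ≤ 0`: this is
Abel summation, obtained from `w(s) = ∫₀¹ 1{l < w(s)} dl` by Fubini, since every superlevel set
`{w > l}` is an initial interval up to a null set.
-/

theorem log_one_add_sub_log_one_add_le {x y : ℝ} (hx : 0 < x) (hy : 0 < y) :
    log (1 + x) - log (1 + y) ≤ x / (1 + x) * (log x - log y) := by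
  have hx1 : 0 < 1 + x := by positivity
  have key := strictConcaveOn_log_Ioi.concaveOn.2 (mem_Ioi.2 one_pos) (mem_Ioi.2 (div_pos hy hx))
    (by positivity : 0 ≤ 1 / (1 + x)) (by positivity : 0 ≤ x / (1 + x)) (by field_simp)
  have hmean : 1 / (1 + x) * 1 + x / (1 + x) * (y / x) = (1 + y) / (1 + x) := by
    field_simp
  simp only [smul_eq_mul] at key
  rw [hmean, log_one, mul_zero, zero_add,
    log_div hy.ne' hx.ne', log_div (by positivity) hx1.ne'] at key
  linarith

theorem log_one_add_sq_le (x : ℝ) : log (1 + x ^ 2) ≤ log 2 + 2 * |log x| := by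
  rcases le_total |x| 1 with hx | hx
  · have : x ^ 2 ≤ 1 := by nlinarith [sq_abs x, abs_nonneg x]
    have : log (1 + x ^ 2) ≤ log 2 := log_le_log (by positivity) (by linarith)
    linarith [abs_nonneg (log x)]
  · calc log (1 + x ^ 2) ≤ log (2 * |x| ^ 2) :=
          log_le_log (by positivity) (by nlinarith [sq_abs x])
      _ = log 2 + 2 * |log x| := by
          rw [log_mul two_ne_zero (by positivity), log_pow, log_abs,
            abs_of_nonneg (by simpa [log_abs] using log_nonneg hx)]
          push_cast; ring

theorem MeasureTheory.Integrable.log_one_add_sq {α : Type*} [MeasurableSpace α] {μ : Measure α}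
    [IsFiniteMeasure μ] {f : α → ℝ} (hf : Integrable (fun x => log (f x)) μ)
    (hpos : ∀ᵐ x ∂μ, 0 < f x) : Integrable (fun x => log (1 + f x ^ 2)) μ := by
  have heq : (fun x => log (1 + exp (2 * log (f x)))) =ᵐ[μ] fun x => log (1 + f x ^ 2) := by
    filter_upwards [hpos] with x hx
    rw [← log_rpow hx, exp_log (by positivity), rpow_two]
  have hcont : Continuous fun u => log (1 + exp u) :=
    (continuous_const.add continuous_exp).log fun u => (add_pos one_pos (exp_pos u)).ne'
  refine Integrable.mono' ((integrable_const (log 2)).add (hf.norm.const_mul 2))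
    ((hcont.comp_aestronglyMeasurable (hf.1.const_mul 2)).congr heq) (ae_of_all _ fun x => ?_)
  rw [norm_of_nonneg (log_nonneg (by nlinarith [sq_nonneg (f x)]))]
  exact log_one_add_sq_le (f x)

section
variable {a b : ℝ} {w h : ℝ → ℝ}

theorem AntitoneOn.exists_lt_apply_iff_lt (hw : AntitoneOn w (Ioo a b)) (hab : a ≤ b) (l : ℝ) :
    ∃ t ∈ Icc a b, ∀ s ∈ Ioo a b, s ≠ t → (l < w s ↔ s < t) := by
  set E := {s ∈ Ioo a b | l < w s}
  have hle_b : ∀ s ∈ insert a E, s ≤ b := by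
    rintro s (rfl | hs)
    exacts [hab, hs.1.2.le]
  have hbdd : BddAbove (insert a E) := ⟨b, hle_b⟩
  refine ⟨sSup (insert a E),
    ⟨le_csSup hbdd (mem_insert a E), csSup_le (insert_nonempty a E) hle_b⟩,
    fun s hs hst => ⟨fun hl => (le_csSup hbdd (mem_insert_of_mem a ⟨hs, hl⟩)).lt_of_ne hst,
      fun hlt => ?_⟩⟩
  obtain ⟨s', hs', hss'⟩ := exists_lt_of_lt_csSup (insert_nonempty a E) hlt
  rcases hs' with rfl | ⟨hs'ab, hl⟩
  · exact absurd hs.1 hss'.not_gt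
  · exact hl.trans_le (hw hs hs'ab hss'.le)

theorem AntitoneOn.setIntegral_ite_lt_nonpos (hw : AntitoneOn w (Ioo a b)) (hab : a ≤ b)
    (hmaj : ∀ t ∈ Ioc a b, ∫ s in Ioo a t, h s ≤ 0) (l : ℝ) :
    ∫ s in Ioo a b, (if l < w s then h s else 0) ≤ 0 := by
  obtain ⟨t, ⟨hat, htb⟩, ht⟩ := hw.exists_lt_apply_iff_lt hab l
  have hae : (fun s => if l < w s then h s else 0) =ᵐ[volume.restrict (Ioo a b)]
      (Ioo a t).indicator h := by
    filter_upwards [ae_restrict_mem measurableSet_Ioo,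
      ae_restrict_of_ae (Measure.ae_ne volume t)] with s hs hst
    simp only [indicator_apply, mem_Ioo, ht s hs hst, hs.1, true_and]
  rw [integral_congr_ae hae, setIntegral_indicator measurableSet_Ioo,
    inter_eq_right.2 (Ioo_subset_Ioo_right htb)]
  rcases hat.eq_or_lt with rfl | hat
  · simp
  · exact hmaj t ⟨hat, htb⟩

theorem integral_Ioo_ite_lt {x C : ℝ} (hx : 0 ≤ x) (hxC : x ≤ C) (y : ℝ) :
    ∫ l in Ioo 0 C, (if l < x then y else 0) = x * y := by
  have : (fun l : ℝ => if l < x then y else 0) = (Iio x).indicator fun _ => y := by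
    ext l; simp [indicator_apply]
  rw [this, integral_indicator_const y measurableSet_Iio,
    measureReal_restrict_apply measurableSet_Iio, Iio_inter_Ioo, min_eq_left hxC,
    volume_real_Ioo_of_le hx, sub_zero, smul_eq_mul]

theorem AntitoneOn.setIntegral_mul_nonpos {C : ℝ} (hw : AntitoneOn w (Ioo a b)) (hab : a ≤ b)
    (hw_nonneg : ∀ s ∈ Ioo a b, 0 ≤ w s) (hw_le : ∀ s ∈ Ioo a b, w s ≤ C)
    (hh : IntegrableOn h (Ioo a b)) (hmaj : ∀ t ∈ Ioc a b, ∫ s in Ioo a t, h s ≤ 0) :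
    ∫ s in Ioo a b, w s * h s ≤ 0 := by
  set F : ℝ → ℝ → ℝ := fun s l => if l < w s then h s else 0
  have hF_eq : Function.uncurry F = {p : ℝ × ℝ | p.2 < w p.1}.indicator (fun p => h p.1) := by
    ext ⟨s, l⟩; simp [F, indicator_apply]
  have hF : Integrable (Function.uncurry F)
      ((volume.restrict (Ioo a b)).prod (volume.restrict (Ioo 0 C))) := by
    have hwm := (aemeasurable_restrict_of_antitoneOn (μ := volume) measurableSet_Ioo
      hw).aestronglyMeasurable
    refine (hh.norm.mul_prod (integrable_const (1 : ℝ))).mono' ?_ (ae_of_all _ fun p => ?_)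
    · rw [hF_eq]
      exact hh.1.comp_fst.indicator₀
        (measurable_snd.aestronglyMeasurable.nullMeasurableSet_lt hwm.comp_fst)
    · rw [hF_eq, mul_one]
      exact norm_indicator_le_norm_self _ _
  calc ∫ s in Ioo a b, w s * h s = ∫ s in Ioo a b, ∫ l in Ioo 0 C, F s l :=
        setIntegral_congr_fun measurableSet_Ioo fun s hs =>
          (integral_Ioo_ite_lt (hw_nonneg s hs) (hw_le s hs) (h s)).symm
    _ = ∫ l in Ioo 0 C, ∫ s in Ioo a b, F s l := integral_integral_swap hF
    _ ≤ 0 := integral_nonpos fun l => hw.setIntegral_ite_lt_nonpos hab hmaj l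

end

theorem log_one_add_sq_sub_log_one_add_sq_le {x y : ℝ} (hx : 0 < x) (hy : 0 < y) :
    log (1 + x ^ 2) - log (1 + y ^ 2) ≤ 2 * (x ^ 2 / (1 + x ^ 2) * (log x - log y)) := by
  have := log_one_add_sub_log_one_add_le (pow_pos hx 2) (pow_pos hy 2)
  rw [log_pow, log_pow] at this
  push_cast at this
  linarith

theorem AntitoneOn.sq_div_one_add_sq {s : Set ℝ} {g : ℝ → ℝ} (hg : AntitoneOn g s)
    (hpos : ∀ x ∈ s, 0 < g x) : AntitoneOn (fun x => g x ^ 2 / (1 + g x ^ 2)) s := by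
  intro x hx y hy hxy
  have hle : g y ^ 2 ≤ g x ^ 2 := pow_le_pow_left₀ (hpos y hy).le (hg hx hy hxy) 2
  rw [div_le_div_iff₀ (by positivity) (by positivity)]
  linarith

theorem log_submajorization_one_add_sq_general
    (f g : ℝ → ℝ)
    (hg_anti : AntitoneOn g (Ioo (0:ℝ) 1))
    (hf_pos : ∀ s ∈ Ioo (0:ℝ) 1, 0 < f s) (hg_pos : ∀ s ∈ Ioo (0:ℝ) 1, 0 < g s)
    (hf_int : IntegrableOn (fun s => log (f s)) (Ioo (0:ℝ) 1))
    (hg_int : IntegrableOn (fun s => log (g s)) (Ioo (0:ℝ) 1))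
    (hmaj : ∀ t ∈ Ioc (0:ℝ) 1,
        ∫ s in Ioo (0:ℝ) t, log (g s) ≤ ∫ s in Ioo (0:ℝ) t, log (f s)) :
    ∫ s in Ioo (0:ℝ) 1, log (1 + g s ^ 2) ≤ ∫ s in Ioo (0:ℝ) 1, log (1 + f s ^ 2) := by
  set w : ℝ → ℝ := fun s => g s ^ 2 / (1 + g s ^ 2)
  have hw_anti : AntitoneOn w (Ioo 0 1) := hg_anti.sq_div_one_add_sq hg_pos
  have hw_nonneg (s : ℝ) : 0 ≤ w s := by positivity
  have hw_le (s : ℝ) : w s ≤ 1 := div_le_one_of_le₀ (by linarith) (by positivity)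
  have hh := hg_int.sub hf_int
  have hwh : ∫ s in Ioo 0 1, w s * (log (g s) - log (f s)) ≤ 0 := by
    refine hw_anti.setIntegral_mul_nonpos zero_le_one (fun s _ => hw_nonneg s)
      (fun s _ => hw_le s) hh fun t ht => ?_
    have hsub : Ioo 0 t ⊆ Ioo (0:ℝ) 1 := Ioo_subset_Ioo_right ht.2
    rw [integral_sub (hg_int.mono_set hsub) (hf_int.mono_set hsub)]
    exact sub_nonpos.2 (hmaj t ht)
  have hwh_int : IntegrableOn (fun s => w s * (log (g s) - log (f s))) (Ioo 0 1) :=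
    hh.bdd_mul
      (aemeasurable_restrict_of_antitoneOn measurableSet_Ioo hw_anti).aestronglyMeasurable
      (ae_of_all _ fun s => by rw [norm_of_nonneg (hw_nonneg s)]; exact hw_le s)
  have hmem : ∀ᵐ s ∂volume.restrict (Ioo (0:ℝ) 1), s ∈ Ioo (0:ℝ) 1 :=
    ae_restrict_mem measurableSet_Ioo
  have hg2 := hg_int.log_one_add_sq (hmem.mono hg_pos)
  have hf2 := hf_int.log_one_add_sq (hmem.mono hf_pos)
  have hlog : ∫ s in Ioo 0 1, (log (1 + g s ^ 2) - log (1 + f s ^ 2))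
      ≤ ∫ s in Ioo 0 1, 2 * (w s * (log (g s) - log (f s))) :=
    integral_mono_ae (hg2.sub hf2) (hwh_int.const_mul 2) (hmem.mono fun s hs =>
      log_one_add_sq_sub_log_one_add_sq_le (hg_pos s hs) (hf_pos s hs))
  rw [integral_sub hg2 hf2, integral_const_mul] at hlog
  linarith

theorem log_submajorization_one_add_sq
    (f g : ℝ → ℝ)
    (hf_anti : AntitoneOn f (Ioo (0:ℝ) 1)) (hg_anti : AntitoneOn g (Ioo (0:ℝ) 1))
    (hf_bdd : ∃ C : ℝ, ∀ s ∈ Ioo (0:ℝ) 1, f s ≤ C)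
    (hg_bdd : ∃ C : ℝ, ∀ s ∈ Ioo (0:ℝ) 1, g s ≤ C)
    (hf_pos : ∀ s ∈ Ioo (0:ℝ) 1, 0 < f s) (hg_pos : ∀ s ∈ Ioo (0:ℝ) 1, 0 < g s)
    (hf_int : IntegrableOn (fun s => log (f s)) (Ioo (0:ℝ) 1))
    (hg_int : IntegrableOn (fun s => log (g s)) (Ioo (0:ℝ) 1))
    (hmaj : ∀ t ∈ Ioc (0:ℝ) 1,
        ∫ s in Ioo (0:ℝ) t, log (g s) ≤ ∫ s in Ioo (0:ℝ) t, log (f s)) :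
    ∫ s in Ioo (0:ℝ) 1, log (1 + g s ^ 2) ≤ ∫ s in Ioo (0:ℝ) 1, log (1 + f s ^ 2) :=
  log_submajorization_one_add_sq_general f g hg_anti hf_pos hg_pos hf_int hg_int hmaj
end

section
/- Let f, g : (0,1) → ℝ be nonincreasing, bounded functions with f(s) > 0 and g(s) > 0 for all s ∈ (0,1), such that log∘f and log∘g are Lebesgue integrable on (0,1), and suppose g is logarithmically submajorized by f, i.e., ∫₀ᵗ log(g(s)) ds ≤ ∫₀ᵗ log(f(s)) ds for all t ∈ (0,1]. Let Φ : [0,∞) → ℝ be a nondecreasing function, continuous at 0, such that the function x ↦ Φ(exp(x)) is convex on ℝ. Then ∫₀¹ Φ(g(s)) ds ≤ ∫₀¹ Φ(f(s)) ds. -/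
/-!
With `φ = Φ ∘ exp` (convex and nondecreasing), `u = log ∘ g` and `v = log ∘ f`, convexity gives
`φ (u s) ≤ φ (v s) + k s * (u s - v s)` where `k s` is the right derivative of `φ` at `u s`.
Since `u` is nonincreasing and `φ'₊` is nondecreasing, `k` is nonincreasing, nonnegative and
bounded. Writing `k s = ∫ λ in (0, B), 𝟙[λ < k s]` and using that every superlevel set of `k` is,
up to a point, an initial interval `(0, t)`, Fubini turns `∫ k (u - v)` into an integral over `λ`
of the integrals `∫ s in (0, t), (u s - v s) ≤ 0`.
-/

open MeasureTheory Real Set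

theorem ConvexOn.add_rightDeriv_mul_sub_le {S : Set ℝ} {φ : ℝ → ℝ} (hφ : ConvexOn ℝ S φ)
    {x y : ℝ} (hx : x ∈ interior S) (hy : y ∈ S) :
    φ x + derivWithin φ (Ioi x) x * (y - x) ≤ φ y := by
  rcases lt_trichotomy x y with hxy | rfl | hyx
  · have h := hφ.rightDeriv_le_slope_of_mem_interior hx hy hxy
    rw [slope_def_field, le_div_iff₀ (sub_pos.2 hxy)] at h
    linarith
  · simp
  · have h := (hφ.slope_le_leftDeriv_of_mem_interior hy hx hyx).trans
      (hφ.leftDeriv_le_rightDeriv_of_mem_interior hx)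
    rw [slope_def_field, div_le_iff₀ (sub_pos.2 hyx)] at h
    linarith

theorem AntitoneOn.integrableOn_of_bound {μ : Measure ℝ} {s : Set ℝ} {h : ℝ → ℝ} {C : ℝ}
    (hh : AntitoneOn h s) (hs : MeasurableSet s) (hμs : μ s < ⊤)
    (hC : ∀ x ∈ s, |h x| ≤ C) : IntegrableOn h s μ :=
  .of_bound hμs (aemeasurable_restrict_of_antitoneOn hs hh).aestronglyMeasurable C
    ((ae_restrict_iff' hs).2 (.of_forall hC))

theorem AntitoneOn.exists_forall_lt_iff_lt {a b c : ℝ} {k : ℝ → ℝ} (hab : a ≤ b)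
    (hk : AntitoneOn k (Ioo a b)) :
    ∃ t ∈ Icc a b, ∀ s ∈ Ioo a b, s ≠ t → (c < k s ↔ s < t) := by
  -- `a` is inserted so that `sSup S` is not the junk value of an empty supremum.
  set S := insert a {s ∈ Ioo a b | c < k s}
  have hS : BddAbove S := ⟨b, by rintro s (rfl | ⟨hs, -⟩); exacts [hab, hs.2.le]⟩
  have haS : a ∈ S := mem_insert a _
  refine ⟨sSup S, ⟨le_csSup hS haS, csSup_le ⟨a, haS⟩ ?_⟩,
    fun s hs hst => ⟨fun hcs => ?_, fun hst' => ?_⟩⟩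
  · rintro s (rfl | ⟨hs, -⟩); exacts [hab, hs.2.le]
  · exact (le_csSup hS (Or.inr ⟨hs, hcs⟩)).lt_of_ne hst
  · obtain ⟨u, hu, hsu⟩ := exists_lt_of_lt_csSup ⟨a, haS⟩ hst'
    rcases hu with rfl | ⟨hu, hcu⟩
    · exact absurd hs.1 hsu.not_gt
    · exact hcu.trans_le (hk hs hu hsu.le)

theorem setIntegral_Ioo_ite_lt {B κ c : ℝ} (hκ₀ : 0 ≤ κ) (hκB : κ ≤ B) :
    ∫ l in Ioo 0 B, (if l < κ then c else 0) = κ * c := by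
  have h : (fun l : ℝ => if l < κ then c else 0) = (Iio κ).indicator fun _ => c := by
    ext l; simp [indicator, mem_Iio]
  rw [h, setIntegral_indicator measurableSet_Iio, Ioo_inter_Iio, min_eq_right hκB,
    setIntegral_const, volume_real_Ioo_of_le hκ₀, sub_zero, smul_eq_mul]

theorem setIntegral_ite_lt_antitoneOn_nonpos {a b c : ℝ} {k w : ℝ → ℝ} (hab : a ≤ b)
    (hk : AntitoneOn k (Ioo a b)) (hw_maj : ∀ t ∈ Ioc a b, ∫ s in Ioo a t, w s ≤ 0) :
    ∫ s in Ioo a b, (if c < k s then w s else 0) ≤ 0 := by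
  obtain ⟨t, ⟨hat, htb⟩, ht⟩ := hk.exists_forall_lt_iff_lt (c := c) hab
  have h : ∫ s in Ioo a b, (if c < k s then w s else 0) = ∫ s in Ioo a t, w s := by
    rw [← min_eq_right htb, ← Ioo_inter_Iio, ← setIntegral_indicator measurableSet_Iio]
    refine setIntegral_congr_ae measurableSet_Ioo ?_
    filter_upwards [volume.ae_ne t] with s hst hs
    simp [indicator, ht s hs hst]
  rw [h]
  rcases hat.eq_or_lt with rfl | hat
  · simp
  · exact hw_maj t ⟨hat, htb⟩

theorem setIntegral_antitoneOn_mul_nonpos {a b B : ℝ} {k w : ℝ → ℝ}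
    (hk : AntitoneOn k (Ioo a b)) (hk₀ : ∀ s ∈ Ioo a b, 0 ≤ k s) (hkB : ∀ s ∈ Ioo a b, k s ≤ B)
    (hw : IntegrableOn w (Ioo a b)) (hw_maj : ∀ t ∈ Ioc a b, ∫ s in Ioo a t, w s ≤ 0) :
    ∫ s in Ioo a b, k s * w s ≤ 0 := by
  rcases lt_or_ge b a with hba | hab
  · simp [Ioo_eq_empty_of_le hba.le]
  set F : ℝ → ℝ → ℝ := fun s l => if l < k s then w s else 0
  have hF : Integrable (Function.uncurry F)
      ((volume.restrict (Ioo a b)).prod (volume.restrict (Ioo 0 B))) := by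
    have hkm := (aemeasurable_restrict_of_antitoneOn (μ := volume) measurableSet_Ioo hk).comp_fst
      (ν := volume.restrict (Ioo 0 B))
    exact (hw.comp_fst _).indicator₀ (nullMeasurableSet_lt measurable_snd.aemeasurable hkm)
  calc ∫ s in Ioo a b, k s * w s = ∫ s in Ioo a b, ∫ l in Ioo 0 B, F s l :=
        setIntegral_congr_fun measurableSet_Ioo fun s hs =>
          (setIntegral_Ioo_ite_lt (hk₀ s hs) (hkB s hs)).symm
    _ = ∫ l in Ioo 0 B, ∫ s in Ioo a b, F s l := integral_integral_swap hF
    _ ≤ 0 := integral_nonpos fun l => setIntegral_ite_lt_antitoneOn_nonpos hab hk hw_maj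

theorem MonotoneOn.integrableOn_comp_antitoneOn {μ : Measure ℝ} {s : Set ℝ} {Φ f : ℝ → ℝ}
    {C : ℝ} (hΦ : MonotoneOn Φ (Ici 0)) (hf : AntitoneOn f s) (hs : MeasurableSet s)
    (hμs : μ s < ⊤) (hf₀ : ∀ x ∈ s, 0 ≤ f x) (hfC : ∀ x ∈ s, f x ≤ C) :
    IntegrableOn (fun x => Φ (f x)) s μ := by
  refine (hΦ.comp_AntitoneOn hf hf₀).integrableOn_of_bound hs hμs
    (C := max |Φ 0| |Φ C|) fun x hx => abs_le.2 ⟨?_, ?_⟩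
  · have := hΦ self_mem_Ici (hf₀ x hx) (hf₀ x hx)
    have := neg_abs_le (Φ 0)
    have := le_max_left |Φ 0| |Φ C|
    linarith
  · have := hΦ (hf₀ x hx) ((hf₀ x hx).trans (hfC x hx)) (hfC x hx)
    have := le_abs_self (Φ C)
    have := le_max_right |Φ 0| |Φ C|
    linarith

theorem ConvexOn.setIntegral_comp_le_of_submajorized {φ u v : ℝ → ℝ} {a b : ℝ}
    (hφ : ConvexOn ℝ univ φ) (hφ_mono : Monotone φ)
    (hu : AntitoneOn u (Ioo a b)) (hu_bdd : BddAbove (u '' Ioo a b))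
    (hu_int : IntegrableOn u (Ioo a b)) (hv_int : IntegrableOn v (Ioo a b))
    (hφu : IntegrableOn (fun s => φ (u s)) (Ioo a b))
    (hφv : IntegrableOn (fun s => φ (v s)) (Ioo a b))
    (huv : ∀ t ∈ Ioc a b, ∫ s in Ioo a t, u s ≤ ∫ s in Ioo a t, v s) :
    ∫ s in Ioo a b, φ (u s) ≤ ∫ s in Ioo a b, φ (v s) := by
  obtain ⟨C, hC⟩ := hu_bdd
  set k := fun s => derivWithin φ (Ioi (u s)) (u s)
  set w := fun s => u s - v s
  have hk : AntitoneOn k (Ioo a b) := fun s hs t ht hst =>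
    hφ.monotoneOn_rightDeriv (by simp) (by simp) (hu hs ht hst)
  have hk₀ : ∀ s ∈ Ioo a b, 0 ≤ k s := fun s _ => (hφ_mono.monotoneOn _).derivWithin_nonneg
  have hkC : ∀ s ∈ Ioo a b, k s ≤ derivWithin φ (Ioi C) C := fun s hs =>
    hφ.monotoneOn_rightDeriv (by simp) (by simp) (hC (mem_image_of_mem u hs))
  have hw : IntegrableOn w (Ioo a b) := hu_int.sub hv_int
  have hw_maj : ∀ t ∈ Ioc a b, ∫ s in Ioo a t, w s ≤ 0 := fun t ht => by
    have hsub : Ioo a t ⊆ Ioo a b := Ioo_subset_Ioo_right ht.2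
    rw [integral_sub (hu_int.mono_set hsub) (hv_int.mono_set hsub), sub_nonpos]
    exact huv t ht
  have hkw : IntegrableOn (fun s => k s * w s) (Ioo a b) :=
    hw.bdd_mul (aemeasurable_restrict_of_antitoneOn measurableSet_Ioo hk).aestronglyMeasurable
      ((ae_restrict_iff' measurableSet_Ioo).2 (.of_forall fun s hs =>
        (norm_of_nonneg (hk₀ s hs)).trans_le (hkC s hs)))
  have hφ_le : ∀ s ∈ Ioo a b, φ (u s) ≤ φ (v s) + k s * w s := fun s _ => by
    have := hφ.add_rightDeriv_mul_sub_le (x := u s) (y := v s) (by simp) trivial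
    linarith
  calc ∫ s in Ioo a b, φ (u s) ≤ ∫ s in Ioo a b, (φ (v s) + k s * w s) :=
        setIntegral_mono_on hφu (hφv.add hkw) measurableSet_Ioo hφ_le
    _ = (∫ s in Ioo a b, φ (v s)) + ∫ s in Ioo a b, k s * w s := integral_add hφv hkw
    _ ≤ ∫ s in Ioo a b, φ (v s) :=
        add_le_of_nonpos_right (setIntegral_antitoneOn_mul_nonpos hk hk₀ hkC hw hw_maj)

theorem log_submajorization_Phi_integral_general
    (f g : ℝ → ℝ)
    (hf_anti : AntitoneOn f (Ioo (0:ℝ) 1)) (hg_anti : AntitoneOn g (Ioo (0:ℝ) 1))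
    (hf_bdd : ∃ C : ℝ, ∀ s ∈ Ioo (0:ℝ) 1, f s ≤ C)
    (hg_bdd : ∃ C : ℝ, ∀ s ∈ Ioo (0:ℝ) 1, g s ≤ C)
    (hf_pos : ∀ s ∈ Ioo (0:ℝ) 1, 0 < f s) (hg_pos : ∀ s ∈ Ioo (0:ℝ) 1, 0 < g s)
    (hf_int : IntegrableOn (fun s => log (f s)) (Ioo (0:ℝ) 1))
    (hg_int : IntegrableOn (fun s => log (g s)) (Ioo (0:ℝ) 1))
    (hmaj : ∀ t ∈ Ioc (0:ℝ) 1,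
        ∫ s in Ioo (0:ℝ) t, log (g s) ≤ ∫ s in Ioo (0:ℝ) t, log (f s))
    (Φ : ℝ → ℝ) (hΦ_mono : MonotoneOn Φ (Ici (0:ℝ)))
    (hΦ_conv : ConvexOn ℝ univ (fun x : ℝ => Φ (exp x))) :
    ∫ s in Ioo (0:ℝ) 1, Φ (g s) ≤ ∫ s in Ioo (0:ℝ) 1, Φ (f s) := by
  obtain ⟨Cf, hfC⟩ := hf_bdd
  obtain ⟨Cg, hgC⟩ := hg_bdd
  have hφ_mono : Monotone fun x => Φ (exp x) := fun x y hxy =>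
    hΦ_mono (exp_pos x).le (exp_pos y).le (exp_le_exp.2 hxy)
  have hexp_log : ∀ h : ℝ → ℝ, (∀ s ∈ Ioo (0:ℝ) 1, 0 < h s) →
      EqOn (fun s => Φ (h s)) (fun s => Φ (exp (log (h s)))) (Ioo 0 1) := fun h hh s hs => by
    simp only [exp_log (hh s hs)]
  have hΦf := hΦ_mono.integrableOn_comp_antitoneOn hf_anti measurableSet_Ioo
    (measure_Ioo_lt_top (μ := volume)) (fun s hs => (hf_pos s hs).le) hfC
  have hΦg := hΦ_mono.integrableOn_comp_antitoneOn hg_anti measurableSet_Ioo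
    (measure_Ioo_lt_top (μ := volume)) (fun s hs => (hg_pos s hs).le) hgC
  rw [setIntegral_congr_fun measurableSet_Ioo (hexp_log g hg_pos),
    setIntegral_congr_fun measurableSet_Ioo (hexp_log f hf_pos)]
  refine hΦ_conv.setIntegral_comp_le_of_submajorized hφ_mono
    (fun s hs t ht hst => log_le_log (hg_pos t ht) (hg_anti hs ht hst))
    ⟨log Cg, ?_⟩ hg_int hf_int (hΦg.congr_fun (hexp_log g hg_pos) measurableSet_Ioo)
    (hΦf.congr_fun (hexp_log f hf_pos) measurableSet_Ioo) hmaj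
  rintro _ ⟨s, hs, rfl⟩
  exact log_le_log (hg_pos s hs) (hgC s hs)

theorem log_submajorization_Phi_integral
    (f g : ℝ → ℝ)
    (hf_anti : AntitoneOn f (Ioo (0:ℝ) 1)) (hg_anti : AntitoneOn g (Ioo (0:ℝ) 1))
    (hf_bdd : ∃ C : ℝ, ∀ s ∈ Ioo (0:ℝ) 1, f s ≤ C)
    (hg_bdd : ∃ C : ℝ, ∀ s ∈ Ioo (0:ℝ) 1, g s ≤ C)
    (hf_pos : ∀ s ∈ Ioo (0:ℝ) 1, 0 < f s) (hg_pos : ∀ s ∈ Ioo (0:ℝ) 1, 0 < g s)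
    (hf_int : IntegrableOn (fun s => log (f s)) (Ioo (0:ℝ) 1))
    (hg_int : IntegrableOn (fun s => log (g s)) (Ioo (0:ℝ) 1))
    (hmaj : ∀ t ∈ Ioc (0:ℝ) 1,
        ∫ s in Ioo (0:ℝ) t, log (g s) ≤ ∫ s in Ioo (0:ℝ) t, log (f s))
    (Φ : ℝ → ℝ) (hΦ_mono : MonotoneOn Φ (Ici (0:ℝ)))
    (hΦ_cont : ContinuousWithinAt Φ (Ici (0:ℝ)) 0)
    (hΦ_conv : ConvexOn ℝ univ (fun x : ℝ => Φ (exp x))) :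
    ∫ s in Ioo (0:ℝ) 1, Φ (g s) ≤ ∫ s in Ioo (0:ℝ) 1, Φ (f s) :=
  log_submajorization_Phi_integral_general f g hf_anti hg_anti hf_bdd hg_bdd hf_pos hg_pos hf_int
    hg_int hmaj Φ hΦ_mono hΦ_conv
end

section
/- Let n ≥ 1, let T ∈ M_n(ℂ), and let P ∈ M_n(ℂ) be an orthogonal projection matrix (P = Pᴴ = P²) such that T P = P T P. Set S = T P + (1 − P) T. Then the matrices I + Sᴴ S and I + Tᴴ T are positive definite Hermitian, their determinants are positive real numbers, and det(I + Sᴴ S) ≤ det(I + Tᴴ T). -/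
/-!
Write `A = T P`, `Y = T (1 - P)` and `M = 1 + A Aᴴ`. Invariance of the range of `P` gives
`S P = A` and `S (1 - P) = (1 - P) Y`, so `S Sᴴ = A Aᴴ + ((1 - P) Y) ((1 - P) Y)ᴴ` while
`T Tᴴ = A Aᴴ + Y Yᴴ`. By Sylvester's identity `det (M + X Xᴴ) = det M · det (1 + Xᴴ M⁻¹ X)`.
Since `M` commutes with `P`, `M⁻¹ = P M⁻¹ P + (1 - P) M⁻¹ (1 - P)`, so passing from
`X = (1 - P) Y` to `X = Y` adds the positive semidefinite `(P Y)ᴴ M⁻¹ (P Y)`, and the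
determinant is monotone on positive definite matrices.
-/

open Matrix
open scoped ComplexOrder

theorem IsStarProjection.mul_star_self_eq_add {R : Type*} [Ring R] [StarRing R] {p : R}
    (hp : IsStarProjection p) (a : R) :
    a * star a = a * p * star (a * p) + a * (1 - p) * star (a * (1 - p)) := by
  have hq := hp.one_sub
  simp only [star_mul, hp.isSelfAdjoint.star_eq, hq.isSelfAdjoint.star_eq, mul_assoc,
    ← mul_assoc p p, ← mul_assoc (1 - p) (1 - p), hp.isIdempotentElem.eq, hq.isIdempotentElem.eq]
  noncomm_ring

theorem IsIdempotentElem.mul_mul_add_one_sub_mul_mul {R : Type*} [Ring R] {p h : R}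
    (hp : IsIdempotentElem p) (hph : Commute p h) :
    p * h * p + (1 - p) * h * (1 - p) = h := by
  have hqh : Commute (1 - p) h := (Commute.one_left h).sub_left hph
  rw [hph.eq, hqh.eq, mul_assoc, mul_assoc, hp.eq, hp.one_sub.eq]
  noncomm_ring

namespace Matrix

variable {𝕜 m n : Type*} [RCLike 𝕜] [Fintype m] [DecidableEq m] [Fintype n] [DecidableEq n]

open scoped MatrixOrder Pointwise in
theorem PosSemidef.one_le_det_one_add {F : Matrix n n 𝕜} (hF : F.PosSemidef) :
    1 ≤ (1 + F).det := by
  have hG : (1 + F).IsHermitian := isHermitian_one.add hF.1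
  rw [hG.det_eq_prod_eigenvalues, ← RCLike.ofReal_prod, ← RCLike.ofReal_one,
    RCLike.ofReal_le_ofReal]
  refine Finset.one_le_prod fun i _ => ?_
  obtain ⟨_, rfl, μ, hμ, hi⟩ : hG.eigenvalues i ∈ {1} + spectrum ℝ F := by
    rw [spectrum.singleton_add_eq, map_one]
    exact hG.eigenvalues_mem_spectrum_real i
  simpa [← hi] using spectrum_nonneg_of_nonneg hF.nonneg hμ

open scoped MatrixOrder in
theorem PosDef.det_le_det_add {M E : Matrix n n 𝕜} (hM : M.PosDef) (hE : E.PosSemidef) :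
    M.det ≤ (M + E).det := by
  obtain ⟨X, rfl⟩ := CStarAlgebra.nonneg_iff_eq_star_mul_self.mp hE.nonneg
  rw [star_eq_conjTranspose, det_add_mul _ _ hM.det_pos.ne'.isUnit]
  exact le_mul_of_one_le_right hM.det_pos.le
    (hM.inv.posSemidef.mul_mul_conjTranspose_same X).one_le_det_one_add

theorem PosDef.det_add_compression_mul_conjTranspose_le {M P : Matrix n n 𝕜} (hM : M.PosDef)
    (hP : IsStarProjection P) (hMP : Commute M P) (Y : Matrix n m 𝕜) :
    (M + (1 - P) * Y * ((1 - P) * Y)ᴴ).det ≤ (M + Y * Yᴴ).det := by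
  have hMdet : IsUnit M.det := hM.det_pos.ne'.isUnit
  have hPH : Pᴴ = P := hP.isSelfAdjoint.star_eq
  have hPM : Commute P M⁻¹ :=
    calc P * M⁻¹ = M⁻¹ * (M * P) * M⁻¹ := by rw [nonsing_inv_mul_cancel_left _ _ hMdet]
      _ = M⁻¹ * P := by rw [hMP.eq, ← mul_assoc, mul_nonsing_inv_cancel_right _ _ hMdet]
  have hpinch : Yᴴ * M⁻¹ * Y =
      ((1 - P) * Y)ᴴ * M⁻¹ * ((1 - P) * Y) + (P * Y)ᴴ * M⁻¹ * (P * Y) := by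
    rw [conjTranspose_mul, conjTranspose_mul, conjTranspose_sub, conjTranspose_one, hPH]
    conv_lhs => rw [← hP.isIdempotentElem.mul_mul_add_one_sub_mul_mul hPM]
    simp only [Matrix.mul_add, Matrix.add_mul, Matrix.mul_assoc]
    exact add_comm _ _
  have hMinv := hM.inv.posSemidef
  rw [det_add_mul _ _ hMdet, det_add_mul _ _ hMdet, hpinch, ← add_assoc]
  exact mul_le_mul_of_nonneg_left
    (PosDef.det_le_det_add (PosDef.one.add_posSemidef (hMinv.conjTranspose_mul_mul_same _))
      (hMinv.conjTranspose_mul_mul_same _)) hM.det_pos.le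

theorem det_one_add_conjTranspose_mul_self_compression_le {T P : Matrix n n 𝕜}
    (hP : IsStarProjection P) (hinv : T * P = P * (T * P)) :
    (1 + (T * P + (1 - P) * T)ᴴ * (T * P + (1 - P) * T)).det ≤ (1 + Tᴴ * T).det := by
  set S := T * P + (1 - P) * T
  have hPH : Pᴴ = P := hP.isSelfAdjoint.star_eq
  have hSP : S * P = T * P := by
    rw [add_mul, mul_assoc, hP.isIdempotentElem.eq, mul_assoc, hinv, ← mul_assoc (1 - P),
      hP.one_sub_mul_self, zero_mul, add_zero]
  have hSQ : S * (1 - P) = (1 - P) * (T * (1 - P)) := by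
    rw [add_mul, mul_assoc T, hP.mul_one_sub_self, mul_zero, zero_add, mul_assoc]
  have hAH : (T * P)ᴴ * P = (T * P)ᴴ :=
    calc (T * P)ᴴ * P = (P * (T * P))ᴴ := by rw [conjTranspose_mul P, hPH]
      _ = (T * P)ᴴ := by rw [← hinv]
  have hMP : Commute (1 + T * P * (T * P)ᴴ) P := by
    refine (Commute.one_left P).add_left ?_
    rw [Commute, SemiconjBy, mul_assoc, hAH, ← mul_assoc, ← hinv]
  have hsplit (X : Matrix n n 𝕜) :
      X * Xᴴ = X * P * (X * P)ᴴ + X * (1 - P) * (X * (1 - P))ᴴ := by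
    simpa only [star_eq_conjTranspose] using hP.mul_star_self_eq_add X
  rw [det_one_add_mul_comm, det_one_add_mul_comm Tᴴ, hsplit S, hsplit T, hSP, hSQ,
    ← add_assoc, ← add_assoc]
  exact PosDef.det_add_compression_mul_conjTranspose_le
    (PosDef.one.add_posSemidef (posSemidef_self_mul_conjTranspose _)) hP hMP _

end Matrix

theorem det_one_add_compression_le_general
    (n : ℕ) (T P : Matrix (Fin n) (Fin n) ℂ)
    (hP_herm : P = Pᴴ) (hP_idem : P * P = P)
    (hinv : T * P = P * (T * P)) :
    (1 + (T * P + (1 - P) * T)ᴴ * (T * P + (1 - P) * T)).PosDef ∧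
    (1 + Tᴴ * T).PosDef ∧
    ∃ a b : ℝ, 0 < a ∧ 0 < b ∧
      (1 + (T * P + (1 - P) * T)ᴴ * (T * P + (1 - P) * T)).det = (a : ℂ) ∧
      (1 + Tᴴ * T).det = (b : ℂ) ∧ a ≤ b := by
  have hP : IsStarProjection P := ⟨hP_idem, hP_herm.symm⟩
  have hS := PosDef.one.add_posSemidef (posSemidef_conjTranspose_mul_self (T * P + (1 - P) * T))
  have hT := PosDef.one.add_posSemidef (posSemidef_conjTranspose_mul_self T)
  obtain ⟨a, ha, hSa⟩ := RCLike.pos_iff_exists_ofReal.mp hS.det_pos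
  obtain ⟨b, hb, hTb⟩ := RCLike.pos_iff_exists_ofReal.mp hT.det_pos
  refine ⟨hS, hT, a, b, ha, hb, hSa.symm, hTb.symm, ?_⟩
  rw [← RCLike.ofReal_le_ofReal (K := ℂ), hSa, hTb]
  exact det_one_add_conjTranspose_mul_self_compression_le hP hinv

theorem det_one_add_compression_le
    (n : ℕ) (hn : 1 ≤ n) (T P : Matrix (Fin n) (Fin n) ℂ)
    (hP_herm : P = Pᴴ) (hP_idem : P * P = P)
    (hinv : T * P = P * (T * P)) :
    (1 + (T * P + (1 - P) * T)ᴴ * (T * P + (1 - P) * T)).PosDef ∧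
    (1 + Tᴴ * T).PosDef ∧
    ∃ a b : ℝ, 0 < a ∧ 0 < b ∧
      (1 + (T * P + (1 - P) * T)ᴴ * (T * P + (1 - P) * T)).det = (a : ℂ) ∧
      (1 + Tᴴ * T).det = (b : ℂ) ∧ a ≤ b :=
  det_one_add_compression_le_general n T P hP_herm hP_idem hinv
end
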